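/- Let N ≥ 2, let λ ∈ ℝ with λ ≠ 0, let x lie in the interior of C_N^A, and let φ : [0,∞) → ℝ^N be a continuously differentiable function taking values in the interior of C_N^A with φ(0) = x that solves the ODE of type A_{N−1}. Then the function ψ(t) := e^{−λt} · φ( (e^{2λt} − 1)/(2λ) ) is well defined on [0,∞) (the time argument is nonnegative for both signs of λ), satisfies ψ(0) = x, takes values in the interior of C_N^A, and solves the ODE with mean reversion: ψ_i'(t) = ∑_{j≠i} 1/(ψ_i(t) − ψ_j(t)) − λ·ψ_i(t) for all i = 1,…,N and all t ≥ 0. -/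

import Mathlib

/-!
The substitution `τ(t) = (e^{2λt} - 1)/(2λ)` has `τ' = e^{2λt}` and maps `[0,∞)` into itself.
For `ψ(t) = e^{-λt} φ(τ(t))` the product and chain rules give
`ψ_i' = -λ ψ_i + e^{λt} ∑_{j≠i} 1/(φ_i(τ) - φ_j(τ))`, and since the interaction term is
homogeneous of degree `-1`, the factor `e^{λt}` is exactly what turns it into
`∑_{j≠i} 1/(ψ_i - ψ_j)`.
-/

open scoped BigOperators

noncomputable section

/-- The interior of the closed Weyl chamber of type A. -/
def interiorA {N : ℕ} (x : Fin N → ℝ) : Prop := StrictAnti x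

/-- `φ` solves the ODE of type `A_{N-1}` on `[0,∞)`. -/
def solvesA {N : ℕ} (φ : ℝ → Fin N → ℝ) : Prop :=
  ∀ t ∈ Set.Ici (0:ℝ), ∀ i : Fin N,
    HasDerivWithinAt (fun s => φ s i)
      (∑ j ∈ Finset.univ.erase i, 1 / (φ t i - φ t j)) (Set.Ici 0) t

open Real Set

-- At `lam = 0` this is `0 / 0 = 0`, not the limit `s`.
def timeChange (lam s : ℝ) : ℝ := (exp (2 * lam * s) - 1) / (2 * lam)

def spaceTimeTransform {N : ℕ} (lam : ℝ) (φ : ℝ → Fin N → ℝ) (s : ℝ) (i : Fin N) : ℝ :=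
  exp (-lam * s) * φ (timeChange lam s) i

def solvesMeanRevertingA {N : ℕ} (lam : ℝ) (ψ : ℝ → Fin N → ℝ) : Prop :=
  ∀ t ∈ Ici (0:ℝ), ∀ i : Fin N,
    HasDerivWithinAt (fun s => ψ s i)
      ((∑ j ∈ Finset.univ.erase i, 1 / (ψ t i - ψ t j)) - lam * ψ t i) (Ici 0) t

theorem timeChange_nonneg (lam : ℝ) {s : ℝ} (hs : 0 ≤ s) : 0 ≤ timeChange lam s := by
  unfold timeChange
  rcases le_total lam 0 with h | h
  · exact div_nonneg_of_nonpos (by linarith [exp_le_one_iff.mpr (by nlinarith : 2 * lam * s ≤ 0)])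
      (by linarith)
  · exact div_nonneg (by linarith [one_le_exp (by positivity : 0 ≤ 2 * lam * s)]) (by linarith)

theorem mapsTo_timeChange (lam : ℝ) : MapsTo (timeChange lam) (Ici 0) (Ici 0) :=
  fun _ hs => timeChange_nonneg lam hs

theorem hasDerivAt_timeChange {lam : ℝ} (hlam : lam ≠ 0) (s : ℝ) :
    HasDerivAt (timeChange lam) (exp (2 * lam * s)) s := by
  have h := (((hasDerivAt_id' s).const_mul (2 * lam)).exp.sub_const 1).div_const (2 * lam)
  exact h.congr_deriv (by field_simp)

theorem sum_one_div_mul_sub_mul {ι : Type*} (s : Finset ι) (f : ι → ℝ) (c : ℝ) (i : ι) :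
    ∑ j ∈ s, 1 / (c * f i - c * f j) = c⁻¹ * ∑ j ∈ s, 1 / (f i - f j) := by
  rw [Finset.mul_sum]
  refine Finset.sum_congr rfl fun j _ => ?_
  rw [← mul_sub, one_div, one_div, mul_inv]

theorem solvesA.solvesMeanRevertingA_spaceTimeTransform {N : ℕ} {φ : ℝ → Fin N → ℝ}
    (hode : solvesA φ) {lam : ℝ} (hlam : lam ≠ 0) :
    solvesMeanRevertingA lam (spaceTimeTransform lam φ) := by
  intro t ht i
  have hφτ : HasDerivWithinAt (fun s => φ (timeChange lam s) i)
      ((∑ j ∈ Finset.univ.erase i, 1 / (φ (timeChange lam t) i - φ (timeChange lam t) j))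
        * exp (2 * lam * t)) (Ici 0) t :=
    (hode _ (timeChange_nonneg lam ht) i).comp t
      (hasDerivAt_timeChange hlam t).hasDerivWithinAt (mapsTo_timeChange lam)
  have hexp : HasDerivWithinAt (fun s => exp (-lam * s)) (exp (-lam * t) * -lam) (Ici 0) t := by
    simpa using (((hasDerivAt_id' t).const_mul (-lam)).exp).hasDerivWithinAt
  refine (hexp.mul hφτ).congr_deriv ?_
  have hscale : exp (-lam * t) * exp (2 * lam * t) = (exp (-lam * t))⁻¹ := by
    rw [← exp_add, ← exp_neg]; ring_nf
  simp only [spaceTimeTransform, sum_one_div_mul_sub_mul, ← hscale]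
  ring

theorem statement17_general (N : ℕ) (lam : ℝ) (hlam : lam ≠ 0)
    (x : Fin N → ℝ)
    (φ : ℝ → Fin N → ℝ) (hφ0 : φ 0 = x)
    (hint : ∀ t ∈ Set.Ici (0:ℝ), interiorA (φ t))
    (hode : solvesA φ) :
    (∀ t ∈ Set.Ici (0:ℝ), (Real.exp (2*lam*t) - 1)/(2*lam) ∈ Set.Ici (0:ℝ)) ∧
    ((fun i => Real.exp (-lam*0) * φ ((Real.exp (2*lam*0) - 1)/(2*lam)) i) = x) ∧
    (∀ t ∈ Set.Ici (0:ℝ),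
      interiorA (fun i => Real.exp (-lam*t) * φ ((Real.exp (2*lam*t) - 1)/(2*lam)) i)) ∧
    (∀ t ∈ Set.Ici (0:ℝ), ∀ i : Fin N,
      HasDerivWithinAt
        (fun s => Real.exp (-lam*s) * φ ((Real.exp (2*lam*s) - 1)/(2*lam)) i)
        ((∑ j ∈ Finset.univ.erase i,
            1 / (Real.exp (-lam*t) * φ ((Real.exp (2*lam*t) - 1)/(2*lam)) i
              - Real.exp (-lam*t) * φ ((Real.exp (2*lam*t) - 1)/(2*lam)) j))
          - lam * (Real.exp (-lam*t) * φ ((Real.exp (2*lam*t) - 1)/(2*lam)) i))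
        (Set.Ici 0) t) := by
  refine ⟨mapsTo_timeChange lam, ?_, fun t ht => ?_,
    hode.solvesMeanRevertingA_spaceTimeTransform hlam⟩
  · funext i
    simp [hφ0]
  · exact (hint _ (timeChange_nonneg lam ht)).const_mul (exp_pos _)

/-- Space-time transformation to the mean-reverting case: if `φ` solves the ODE
of type `A_{N-1}` with `φ(0) = x` in the interior of `C_N^A`, then
`ψ(t) = e^{-λt}·φ((e^{2λt}-1)/(2λ))` is well defined (the time argument is
nonnegative for both signs of `λ`), starts at `x`, stays in the interior of
`C_N^A`, and solves `ψ_i' = ∑_{j≠i} 1/(ψ_i - ψ_j) - λψ_i`. -/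
theorem statement17 (N : ℕ) (hN : 2 ≤ N) (lam : ℝ) (hlam : lam ≠ 0)
    (x : Fin N → ℝ) (hx : interiorA x)
    (φ : ℝ → Fin N → ℝ) (hφ0 : φ 0 = x)
    (hint : ∀ t ∈ Set.Ici (0:ℝ), interiorA (φ t))
    (hode : solvesA φ) :
    (∀ t ∈ Set.Ici (0:ℝ), (Real.exp (2*lam*t) - 1)/(2*lam) ∈ Set.Ici (0:ℝ)) ∧
    ((fun i => Real.exp (-lam*0) * φ ((Real.exp (2*lam*0) - 1)/(2*lam)) i) = x) ∧
    (∀ t ∈ Set.Ici (0:ℝ),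
      interiorA (fun i => Real.exp (-lam*t) * φ ((Real.exp (2*lam*t) - 1)/(2*lam)) i)) ∧
    (∀ t ∈ Set.Ici (0:ℝ), ∀ i : Fin N,
      HasDerivWithinAt
        (fun s => Real.exp (-lam*s) * φ ((Real.exp (2*lam*s) - 1)/(2*lam)) i)
        ((∑ j ∈ Finset.univ.erase i,
            1 / (Real.exp (-lam*t) * φ ((Real.exp (2*lam*t) - 1)/(2*lam)) i
              - Real.exp (-lam*t) * φ ((Real.exp (2*lam*t) - 1)/(2*lam)) j))
          - lam * (Real.exp (-lam*t) * φ ((Real.exp (2*lam*t) - 1)/(2*lam)) i))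
        (Set.Ici 0) t) :=
  statement17_general N lam hlam x φ hφ0 hint hode
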